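/- arXiv:1312.5345 — 2 statements merged into one kernel-verified Lean document; each statement's English description precedes it below -/
import Mathlib

section
/- Let h, p ∈ ℂ, I ≥ 0, σ² > 0, and define SNR = |h|²|p|²/(I + σ²) and E(u, w) = 1 + log(w) − w·(|1 − ū·h·p|² + |u|²·(I + σ²)) for u ∈ ℂ, w > 0. Then sup_{u ∈ ℂ, w > 0} E(u, w) = log(1 + SNR), and the supremum is attained at u* = h·p/(|h·p|² + I + σ²) and w* = 1 + SNR. -/
/-!
Write `g = h p`, `c = I + σ²` and `e(u) = ‖1 - ū g‖² + ‖u‖² c` for the mean squared error.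
Completing the square gives `e(u) = (‖g‖² + c) ‖u - g / (‖g‖² + c)‖² + c / (‖g‖² + c)`, so the
MSE is at least `c / (‖g‖² + c) = (1 + SNR)⁻¹`, with equality at the MMSE receiver `u*`.
On the other hand `log x ≤ x - 1` at `x = w m` gives `1 + log w - w m ≤ -log m`, with equality
at `w = m⁻¹`. Chaining the two bounds yields `E(u, w) ≤ log (1 + SNR)`, attained at `(u*, 1 + SNR)`.
-/

open Complex ComplexConjugate

theorem Real.one_add_log_sub_mul_le_neg_log {w m : ℝ} (hw : 0 < w) (hm : 0 < m) :
    1 + Real.log w - w * m ≤ -Real.log m := by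
  have := Real.log_le_sub_one_of_pos (mul_pos hw hm)
  rw [Real.log_mul hw.ne' hm.ne'] at this
  linarith

noncomputable def mse (g : ℂ) (c : ℝ) (u : ℂ) : ℝ :=
  ‖1 - conj u * g‖ ^ 2 + ‖u‖ ^ 2 * c

theorem mse_eq_mul_sq_add (g : ℂ) {c : ℝ} (hd : ‖g‖ ^ 2 + c ≠ 0) (u : ℂ) :
    mse g c u =
      (‖g‖ ^ 2 + c) * ‖u - g / ((‖g‖ ^ 2 + c : ℝ) : ℂ)‖ ^ 2 + c / (‖g‖ ^ 2 + c) := by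
  unfold mse
  generalize hd_def : ‖g‖ ^ 2 + c = d at *
  obtain rfl : c = d - ‖g‖ ^ 2 := by linarith
  simp only [Complex.sq_norm, Complex.normSq_apply, sub_re, sub_im, one_re, one_im, mul_re,
    mul_im, conj_re, conj_im, div_ofReal_re, div_ofReal_im]
  field_simp
  ring

theorem div_le_mse (g : ℂ) {c : ℝ} (hc : 0 < c) (u : ℂ) :
    c / (‖g‖ ^ 2 + c) ≤ mse g c u := by
  have hd : 0 < ‖g‖ ^ 2 + c := by positivity
  rw [mse_eq_mul_sq_add g hd.ne']
  have := mul_nonneg hd.le (sq_nonneg ‖u - g / ((‖g‖ ^ 2 + c : ℝ) : ℂ)‖)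
  linarith

theorem mse_div (g : ℂ) {c : ℝ} (hd : ‖g‖ ^ 2 + c ≠ 0) :
    mse g c (g / ((‖g‖ ^ 2 + c : ℝ) : ℂ)) = c / (‖g‖ ^ 2 + c) := by
  rw [mse_eq_mul_sq_add g hd, sub_self, norm_zero]
  ring

/-- Scalar rate–MSE relationship: `sup_{u ∈ ℂ, w > 0} E(u, w) = log(1 + SNR)`,
attained at `u* = h p / (|h p|² + I + σ²)` and `w* = 1 + SNR`, where
`E(u, w) = 1 + log w − w (|1 − conj u · h · p|² + |u|²(I + σ²))`. -/
theorem stmt_2 (h p : ℂ) (I σ2 : ℝ) (hI : 0 ≤ I) (hσ : 0 < σ2) :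
    let SNR : ℝ := ‖h‖ ^ 2 * ‖p‖ ^ 2 / (I + σ2)
    let E : ℂ → ℝ → ℝ := fun u w =>
      1 + Real.log w -
        w * (‖1 - (starRingEnd ℂ) u * h * p‖ ^ 2
              + ‖u‖ ^ 2 * (I + σ2))
    let ustar : ℂ := h * p / ((‖h * p‖ ^ 2 + I + σ2 : ℝ) : ℂ)
    (∀ u : ℂ, ∀ w : ℝ, 0 < w → E u w ≤ Real.log (1 + SNR)) ∧
    E ustar (1 + SNR) = Real.log (1 + SNR) := by
  intro SNR E ustar
  have hc : 0 < I + σ2 := by positivity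
  have hd : 0 < ‖h * p‖ ^ 2 + (I + σ2) := by positivity
  have hSNR : 1 + SNR = ((I + σ2) / (‖h * p‖ ^ 2 + (I + σ2)))⁻¹ := by
    simp only [SNR, norm_mul, inv_div]
    field_simp
    ring
  have hE : ∀ u w, E u w = 1 + Real.log w - w * mse (h * p) (I + σ2) u := by
    intro u w
    simp only [E, mse, mul_assoc]
  refine ⟨fun u w hw => ?_, ?_⟩
  · have hmin := div_le_mse (h * p) hc u
    calc E u w ≤ -Real.log (mse (h * p) (I + σ2) u) := by
          rw [hE]
          exact Real.one_add_log_sub_mul_le_neg_log hw (lt_of_lt_of_le (by positivity) hmin)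
      _ ≤ -Real.log ((I + σ2) / (‖h * p‖ ^ 2 + (I + σ2))) := by gcongr
      _ = Real.log (1 + SNR) := by rw [hSNR, Real.log_inv]
  · have hu : ustar = h * p / ((‖h * p‖ ^ 2 + (I + σ2) : ℝ) : ℂ) := by
      simp only [ustar, add_assoc]
    rw [hE, hu, mse_div _ hd.ne', hSNR, inv_mul_cancel₀ (by positivity)]
    ring
end

section
/- Let M ≥ 1, a ∈ ℝ^M, C > 0. Consider minimizing f(x) = Σ_{m=1}^M (a_m − x_m)² over the set S = {x ∈ ℝ^M : x_m ≥ 0 for all m, Σ_m x_m ≤ C}. Then: (i) if Σ_m max{0, a_m} ≤ C, the minimizer is x_m* = max{0, a_m}; (ii) otherwise, there exists a unique λ* > 0 with Σ_m max{0, a_m − λ*} = C, and the minimizer is x_m* = max{0, a_m − λ*}. In both cases the minimizer is unique. -/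
private lemma pyth_aux (M : ℕ) (a xs x : Fin M → ℝ)
    (h : ∑ m, (a m - xs m) * (x m - xs m) ≤ 0) :
    ∑ m, (a m - xs m) ^ 2 + ∑ m, (x m - xs m) ^ 2 ≤ ∑ m, (a m - x m) ^ 2 := by
  have key : ∑ m, (a m - x m) ^ 2
      = ∑ m, ((a m - xs m) ^ 2 + (x m - xs m) ^ 2
          - 2 * ((a m - xs m) * (x m - xs m))) := by
    apply Finset.sum_congr rfl; intros; ring
  rw [key]
  simp only [Finset.sum_sub_distrib, Finset.sum_add_distrib, ← Finset.mul_sum]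
  linarith

private lemma min_and_unique (M : ℕ) (a xs : Fin M → ℝ) (x : Fin M → ℝ)
    (h : ∑ m, (a m - xs m) * (x m - xs m) ≤ 0) :
    (∑ m, (a m - xs m) ^ 2 ≤ ∑ m, (a m - x m) ^ 2) ∧
    (∑ m, (a m - x m) ^ 2 = ∑ m, (a m - xs m) ^ 2 → x = xs) := by
  have hp := pyth_aux M a xs x h
  have hnn : (0:ℝ) ≤ ∑ m, (x m - xs m) ^ 2 :=
    Finset.sum_nonneg fun m _ => sq_nonneg _
  constructor
  · linarith
  · intro heq
    have hz : ∑ m, (x m - xs m) ^ 2 = 0 := le_antisymm (by linarith) hnn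
    have := (Finset.sum_eq_zero_iff_of_nonneg (fun m _ => sq_nonneg (x m - xs m))).1 hz
    funext m
    have := this m (Finset.mem_univ m)
    have : x m - xs m = 0 := by
      have := sq_eq_zero_iff.1 this; exact this
    linarith

/-- Projection onto `{x : x ≥ 0, ∑ x ≤ C}`: the minimizer of
`∑ (a_m − x_m)²` is `x_m* = max 0 (a_m)` if `∑ max 0 (a_m) ≤ C`, and
otherwise `x_m* = max 0 (a_m − λ*)` for the unique `λ* > 0` with
`∑ max 0 (a_m − λ*) = C`; in both cases the minimizer is unique. -/
theorem stmt_6 (M : ℕ) (hM : 1 ≤ M) (a : Fin M → ℝ) (C : ℝ) (hC : 0 < C) :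
    let f : (Fin M → ℝ) → ℝ := fun x => ∑ m, (a m - x m) ^ 2
    let S : Set (Fin M → ℝ) := {x | (∀ m, 0 ≤ x m) ∧ ∑ m, x m ≤ C}
    ((∑ m, max 0 (a m) ≤ C →
      (fun m => max 0 (a m)) ∈ S ∧
      (∀ x ∈ S, f (fun m => max 0 (a m)) ≤ f x) ∧
      (∀ x ∈ S, f x = f (fun m => max 0 (a m)) → x = fun m => max 0 (a m)))) ∧
    ((C < ∑ m, max 0 (a m) →
      ∃ lam : ℝ, 0 < lam ∧ (∑ m, max 0 (a m - lam)) = C ∧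
        (∀ lam' : ℝ, 0 < lam' → (∑ m, max 0 (a m - lam')) = C → lam' = lam) ∧
        (fun m => max 0 (a m - lam)) ∈ S ∧
        (∀ x ∈ S, f (fun m => max 0 (a m - lam)) ≤ f x) ∧
        (∀ x ∈ S, f x = f (fun m => max 0 (a m - lam)) →
          x = fun m => max 0 (a m - lam)))) := by
  intro f S
  constructor
  · -- Case 1 : ∑ max 0 (a m) ≤ C
    intro hsum
    have hmemS : (fun m => max 0 (a m)) ∈ S := ⟨fun m => le_max_left _ _, hsum⟩
    have hip : ∀ x ∈ S, ∑ m, (a m - max 0 (a m)) * (x m - max 0 (a m)) ≤ 0 := by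
      intro x hx
      apply Finset.sum_nonpos
      intro m _
      rcases le_or_gt 0 (a m) with h | h
      · rw [max_eq_right h]; simp
      · rw [max_eq_left h.le]
        have := hx.1 m
        have : a m * (x m - 0) ≤ 0 := mul_nonpos_of_nonpos_of_nonneg h.le (by linarith)
        simpa using this
    refine ⟨hmemS, ?_, ?_⟩
    · intro x hx; exact (min_and_unique M a _ x (hip x hx)).1
    · intro x hx heq; exact (min_and_unique M a _ x (hip x hx)).2 heq
  · -- Case 2 : C < ∑ max 0 (a m)
    intro hsum
    set g : ℝ → ℝ := fun lam => ∑ m, max 0 (a m - lam) with hg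
    have hgcont : Continuous g := by
      apply continuous_finset_sum
      intro m _
      exact continuous_const.max (continuous_const.sub continuous_id)
    have hganti : ∀ s t : ℝ, s ≤ t → g t ≤ g s := by
      intro s t hst
      apply Finset.sum_le_sum
      intro m _
      exact max_le_max le_rfl (by linarith)
    -- choose B with a m < B for all m
    set B : ℝ := (∑ m, max 0 (a m)) + 1 with hB
    have hBnn : 0 ≤ B := by
      have : (0:ℝ) ≤ ∑ m, max 0 (a m) :=
        Finset.sum_nonneg fun m _ => le_max_left _ _
      linarith
    have haB : ∀ m, a m < B := by
      intro m
      have h1 : a m ≤ max 0 (a m) := le_max_right _ _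
      have h2 : max 0 (a m) ≤ ∑ m, max 0 (a m) :=
        Finset.single_le_sum (fun m _ => le_max_left 0 (a m)) (Finset.mem_univ m)
      simp only [hB]; linarith
    have hgB : g B = 0 := by
      apply Finset.sum_eq_zero
      intro m _
      exact max_eq_left (by linarith [haB m])
    have hg0 : C < g 0 := by simpa [g] using hsum
    -- IVT
    obtain ⟨lam, hlamIcc, hlamC⟩ :=
      intermediate_value_Icc' hBnn hgcont.continuousOn
        (by rw [hgB]; exact ⟨hC.le, hg0.le⟩ : C ∈ Set.Icc (g B) (g 0))
    have hlam0 : 0 < lam := by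
      rcases lt_or_eq_of_le hlamIcc.1 with h | h
      · exact h
      · exfalso; rw [← h] at hlamC; rw [hlamC] at hg0; exact lt_irrefl _ hg0
    -- strict decrease at points where value is positive
    have hstrict : ∀ s t : ℝ, s < t → g t = C → g s > C := by
      intro s t hst hgt
      have hpos : ∃ m, 0 < a m - t := by
        by_contra hcon
        push_neg at hcon
        have : g t = 0 := Finset.sum_eq_zero fun m _ => max_eq_left (hcon m)
        rw [hgt] at this; linarith
      obtain ⟨m0, hm0⟩ := hpos
      have hlt : g t < g s := by
        apply Finset.sum_lt_sum (fun m _ => max_le_max le_rfl (by linarith))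
        refine ⟨m0, Finset.mem_univ m0, ?_⟩
        rw [max_eq_right hm0.le, max_eq_right (by linarith : (0:ℝ) ≤ a m0 - s)]
        linarith
      rw [hgt] at hlt; exact hlt
    refine ⟨lam, hlam0, hlamC, ?_, ?_, ?_, ?_⟩
    · -- uniqueness of lam
      intro lam' _ hlam'C
      rcases lt_trichotomy lam' lam with h | h | h
      · exfalso; have := hstrict lam' lam h hlamC; simp only [g] at this
        rw [hlam'C] at this; exact lt_irrefl _ this
      · exact h
      · exfalso
        have hgl' : g lam' = C := hlam'C
        have := hstrict lam lam' h hgl'; simp only [g] at this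
        have hgl : (∑ m, max 0 (a m - lam)) = C := hlamC
        rw [hgl] at this; exact lt_irrefl _ this
    · exact ⟨fun m => le_max_left _ _, le_of_eq hlamC⟩
    all_goals {
      have hip : ∀ x ∈ S, ∑ m, (a m - max 0 (a m - lam)) * (x m - max 0 (a m - lam)) ≤ 0 := by
        intro x hx
        have hsplit : ∑ m, (a m - max 0 (a m - lam)) * (x m - max 0 (a m - lam))
            = (∑ m, (a m - lam - max 0 (a m - lam)) * (x m - max 0 (a m - lam)))
              + lam * (∑ m, x m - ∑ m, max 0 (a m - lam)) := by
          have hlin : lam * (∑ m, x m - ∑ m, max 0 (a m - lam))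
              = ∑ m, lam * (x m - max 0 (a m - lam)) := by
            rw [← Finset.sum_sub_distrib, Finset.mul_sum]
          rw [hlin, ← Finset.sum_add_distrib]
          apply Finset.sum_congr rfl; intros; ring
        rw [hsplit]
        have h1 : ∑ m, (a m - lam - max 0 (a m - lam)) * (x m - max 0 (a m - lam)) ≤ 0 := by
          apply Finset.sum_nonpos
          intro m _
          rcases le_or_gt 0 (a m - lam) with h | h
          · rw [max_eq_right h]; simp
          · rw [max_eq_left h.le]
            have := hx.1 m
            have : (a m - lam) * (x m - 0) ≤ 0 :=
              mul_nonpos_of_nonpos_of_nonneg h.le (by linarith)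
            simpa using this
        have h2 : lam * (∑ m, x m - ∑ m, max 0 (a m - lam)) ≤ 0 := by
          apply mul_nonpos_of_nonneg_of_nonpos hlam0.le
          have hgl : (∑ m, max 0 (a m - lam)) = C := hlamC
          rw [hgl]
          linarith [hx.2]
        linarith
      first
      | exact fun x hx => (min_and_unique M a _ x (hip x hx)).1
      | exact fun x hx heq => (min_and_unique M a _ x (hip x hx)).2 heq
    }
end
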